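/- Let R and S be topological rings with commuting continuous actions of φ and a group Γ, with an injective flat ring map R → S compatible with all structures. Suppose M, N are projective étale (φ,Γ)-modules over R. If for every projective étale φ-module P over R the natural map P^{φ=1} → (S ⊗_R P)^{φ=1} is an isomorphism, then the base-change functor M ↦ S ⊗_R M from projective étale (φ,Γ)-modules over R to those over S is fully faithful. -/
import Mathlib


open TensorProduct

variable {R : Type*} [CommRing R]

/-- `R` viewed as a module over itself via the ring endomorphism `φ`
(the `φ`-twist used to form the base change `φ*M`). -/
def Tw (_φ : R →+* R) : Type _ := R

/-- The identity, unwrapping the twist. -/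
def Tw.val {φ : R →+* R} (s : Tw φ) : R := s

instance (φ : R →+* R) : AddCommGroup (Tw φ) := inferInstanceAs (AddCommGroup R)
instance (φ : R →+* R) : Module R (Tw φ) := Module.compHom R φ

/-- The linearization `φ*M = R ⊗_{R,φ} M → M`, `s ⊗ m ↦ s • F m`, of a `φ`-semilinear
map `F : M → M`.  The `φ`-module `(M, F)` is *étale* precisely when this map is
bijective. -/
noncomputable def phiLin (φ : R →+* R) {M : Type*} [AddCommGroup M] [Module R M]
    (F : M →ₛₗ[φ] M) : Tw φ ⊗[R] M →+ M :=
  TensorProduct.liftAddHom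
    { toFun := fun s => AddMonoidHom.mk' (fun m => s.val • F m)
        (fun a b => by simp [smul_add])
      map_zero' := by ext m; exact zero_smul R (F m)
      map_add' := fun a b => by ext m; exact add_smul a.val b.val (F m) }
    (fun r s m => by
      show (r • s).val • F m = s.val • F (r • m)
      have h1 : (r • s).val = φ r * s.val := rfl
      rw [h1, F.map_smulₛₗ, smul_smul, mul_comm])



section Aux
variable {R₁ : Type*} [CommRing R₁] (A : Type*) [CommRing A] [Algebra R₁ A]
variable (M N : Type*) [AddCommGroup M] [Module R₁ M] [AddCommGroup N] [Module R₁ N]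

noncomputable def aux_sr (n : ℕ) (i : Fin n) : N →ₗ[R₁] ((Fin n → R₁) →ₗ[R₁] N) where
  toFun x := (LinearMap.proj i).smulRight x
  map_add' x y := by
    apply LinearMap.ext; intro v
    simp only [LinearMap.smulRight_apply, LinearMap.add_apply]
    exact smul_add _ _ _
  map_smul' r x := by
    apply LinearMap.ext; intro v
    simp only [LinearMap.smulRight_apply, RingHom.id_apply, LinearMap.smul_apply]
    exact smul_comm _ _ _

lemma aux_sr_single (n : ℕ) (i k : Fin n) (x : N) :
    aux_sr N n i x (Pi.single k (1:R₁)) = if k = i then x else 0 := by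
  classical
  simp only [aux_sr, LinearMap.coe_mk, AddHom.coe_mk, LinearMap.smulRight_apply,
    LinearMap.proj_apply, Pi.single_apply]
  by_cases h : k = i
  · simp [h]
  · rw [if_neg h, if_neg (fun h' => h h'.symm), zero_smul]

lemma aux_single_sum (n : ℕ) (v : Fin n → R₁) :
    ∑ i, v i • (Pi.single i (1:R₁) : Fin n → R₁) = v := by
  classical
  have : ∀ i, v i • (Pi.single i (1:R₁) : Fin n → R₁) = (Pi.single i (v i) : Fin n → R₁) := by
    intro i
    funext j
    simp only [Pi.smul_apply, Pi.single_apply, smul_eq_mul, mul_ite, mul_one, mul_zero]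
  simp only [this]
  exact Finset.univ_sum_single v

lemma aux_sum_sr (n : ℕ) (g : (Fin n → R₁) →ₗ[R₁] N) :
    ∑ i, aux_sr N n i (g (Pi.single i (1:R₁))) = g := by
  apply LinearMap.ext; intro v
  simp only [LinearMap.coe_sum, Finset.sum_apply, aux_sr, LinearMap.coe_mk, AddHom.coe_mk,
    LinearMap.smulRight_apply, LinearMap.proj_apply]
  calc ∑ i, v i • g ((Pi.single i (1:R₁) : Fin n → R₁)) = ∑ i, g (v i • (Pi.single i (1:R₁) : Fin n → R₁)) := by
        simp only [map_smul]
    _ = g (∑ i, v i • (Pi.single i (1:R₁) : Fin n → R₁)) := by rw [map_sum]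
    _ = g v := by rw [aux_single_sum]

lemma aux_extA' {P : Type*} [AddCommGroup P] [Module A P] (f g : A ⊗[R₁] M →ₗ[A] P)
    (h : ∀ m : M, f ((1:A) ⊗ₜ[R₁] m) = g ((1:A) ⊗ₜ[R₁] m)) : f = g := by
  ext x
  induction x using TensorProduct.induction_on with
  | zero => simp
  | tmul a m =>
      have ha : a ⊗ₜ[R₁] m = a • ((1:A) ⊗ₜ[R₁] m) := by
        rw [TensorProduct.smul_tmul', smul_eq_mul, mul_one]
      rw [ha, map_smul, map_smul, h]
  | add x y hx hy => rw [map_add, map_add, hx, hy]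

lemma aux_e_tmul' (a : A) (g : M →ₗ[R₁] N) :
    LinearMap.tensorProduct R₁ A M N (a ⊗ₜ[R₁] g) = a • LinearMap.baseChange A g := by
  simp [LinearMap.tensorProduct]

lemma aux_key_free (n : ℕ) :
    Function.Bijective (LinearMap.tensorProduct R₁ A (Fin n → R₁) N) := by
  classical
  set e := LinearMap.tensorProduct R₁ A (Fin n → R₁) N with he
  have etm : ∀ (a : A) (g : (Fin n → R₁) →ₗ[R₁] N), e (a ⊗ₜ[R₁] g) = a • LinearMap.baseChange A g :=
    fun a g => aux_e_tmul' A (Fin n → R₁) N a g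
  set κ : Fin n → (A ⊗[R₁] N →ₗ[R₁] A ⊗[R₁] ((Fin n → R₁) →ₗ[R₁] N)) :=
    fun i => LinearMap.lTensor A (aux_sr N n i) with hκ
  have eκ : ∀ (i k : Fin n) (u : A ⊗[R₁] N),
      e (κ i u) ((1:A) ⊗ₜ[R₁] (Pi.single k (1:R₁) : Fin n → R₁)) = if k = i then u else 0 := by
    intro i k u
    induction u using TensorProduct.induction_on with
    | zero => simp
    | tmul a x =>
        simp only [hκ, LinearMap.lTensor_tmul]
        rw [etm]
        simp only [LinearMap.smul_apply, LinearMap.baseChange_tmul, aux_sr_single]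
        by_cases h : k = i
        · rw [if_pos h, if_pos h, TensorProduct.smul_tmul', smul_eq_mul, mul_one]
        · rw [if_neg h, if_neg h, TensorProduct.tmul_zero, smul_zero]
    | add x y hx hy =>
        rw [map_add, map_add, LinearMap.add_apply, hx, hy]
        by_cases h : k = i <;> simp [h]
  set Ψ : (A ⊗[R₁] (Fin n → R₁) →ₗ[A] A ⊗[R₁] N) → A ⊗[R₁] ((Fin n → R₁) →ₗ[R₁] N) :=
    fun h => ∑ i, κ i (h ((1:A) ⊗ₜ[R₁] (Pi.single i (1:R₁) : Fin n → R₁))) with hΨ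
  have left : ∀ t, Ψ (e t) = t := by
    intro t
    induction t using TensorProduct.induction_on with
    | zero => simp [hΨ]
    | tmul a g =>
        simp only [hΨ]
        have h1 : ∀ i : Fin n, e (a ⊗ₜ[R₁] g) ((1:A) ⊗ₜ[R₁] (Pi.single i (1:R₁) : Fin n → R₁))
            = a ⊗ₜ[R₁] g (Pi.single i (1:R₁)) := by
          intro i
          rw [etm]
          simp only [LinearMap.smul_apply, LinearMap.baseChange_tmul]
          rw [TensorProduct.smul_tmul', smul_eq_mul, mul_one]
        simp only [h1, hκ, LinearMap.lTensor_tmul]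
        rw [← TensorProduct.tmul_sum, aux_sum_sr]
    | add x y hx hy =>
        have : ∀ h₁ h₂, Ψ (h₁ + h₂) = Ψ h₁ + Ψ h₂ := by
          intro h₁ h₂
          simp only [hΨ, LinearMap.add_apply, map_add, Finset.sum_add_distrib]
        rw [map_add, this, hx, hy]
  have right : ∀ h, e (Ψ h) = h := by
    intro h
    apply aux_extA'
    intro m
    have hm : (1:A) ⊗ₜ[R₁] m = ∑ i, m i • ((1:A) ⊗ₜ[R₁] (Pi.single i (1:R₁) : Fin n → R₁)) := by
      conv_lhs => rw [← aux_single_sum n m]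
      rw [TensorProduct.tmul_sum]
      congr 1
      funext i
      rw [TensorProduct.tmul_smul]
    have key1 : ∀ k : Fin n, e (Ψ h) ((1:A) ⊗ₜ[R₁] (Pi.single k (1:R₁) : Fin n → R₁))
        = h ((1:A) ⊗ₜ[R₁] (Pi.single k (1:R₁) : Fin n → R₁)) := by
      intro k
      rw [hΨ]
      simp only [map_sum, LinearMap.sum_apply]
      rw [Finset.sum_congr rfl (fun i _ => eκ i k _)]
      simp
    rw [hm]
    simp only [map_sum, LinearMap.map_smul_of_tower]
    exact Finset.sum_congr rfl (fun k _ => by rw [key1 k])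
  exact ⟨fun t t' htt => by rw [← left t, ← left t', htt], fun h => ⟨Ψ h, right h⟩⟩

lemma aux_nat {M₁ M₂ : Type*} [AddCommGroup M₁] [Module R₁ M₁] [AddCommGroup M₂] [Module R₁ M₂]
    (u : M₁ →ₗ[R₁] M₂) (t : A ⊗[R₁] (M₂ →ₗ[R₁] N)) :
    LinearMap.tensorProduct R₁ A M₁ N (LinearMap.lTensor A (LinearMap.lcomp R₁ N u) t)
      = (LinearMap.tensorProduct R₁ A M₂ N t).comp (LinearMap.baseChange A u) := by
  induction t using TensorProduct.induction_on with
  | zero => simp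
  | tmul a g =>
      rw [LinearMap.lTensor_tmul, aux_e_tmul', aux_e_tmul']
      rw [LinearMap.smul_comp, LinearMap.lcomp_apply', LinearMap.baseChange_comp]
  | add x y hx hy => rw [map_add, map_add, hx, hy, map_add, LinearMap.add_comp]

lemma aux_key [Module.Finite R₁ M] [Module.Projective R₁ M] :
    Function.Bijective (LinearMap.tensorProduct R₁ A M N) := by
  obtain ⟨n, p, hp⟩ := Module.Finite.exists_fin' R₁ M
  obtain ⟨i, hi⟩ := Module.projective_lifting_property p LinearMap.id hp
  have hretr : (LinearMap.lcomp R₁ N i).comp (LinearMap.lcomp R₁ N p) = LinearMap.id := by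
    apply LinearMap.ext; intro g
    simp only [LinearMap.comp_apply, LinearMap.lcomp_apply', LinearMap.id_apply]
    rw [LinearMap.comp_assoc, hi, LinearMap.comp_id]
  have hcancel : ∀ t : A ⊗[R₁] (M →ₗ[R₁] N),
      LinearMap.lTensor A (LinearMap.lcomp R₁ N i)
        (LinearMap.lTensor A (LinearMap.lcomp R₁ N p) t) = t := by
    intro t
    rw [← LinearMap.comp_apply, ← LinearMap.lTensor_comp, hretr, LinearMap.lTensor_id,
      LinearMap.id_apply]
  constructor
  · intro t t' htt
    have h1 : LinearMap.tensorProduct R₁ A (Fin n → R₁) N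
          (LinearMap.lTensor A (LinearMap.lcomp R₁ N p) t)
        = LinearMap.tensorProduct R₁ A (Fin n → R₁) N
          (LinearMap.lTensor A (LinearMap.lcomp R₁ N p) t') := by
      rw [aux_nat, aux_nat, htt]
    have h2 := (aux_key_free A N n).1 h1
    have := congrArg (LinearMap.lTensor A (LinearMap.lcomp R₁ N i)) h2
    rwa [hcancel, hcancel] at this
  · intro h
    obtain ⟨t'', ht⟩ := (aux_key_free A N n).2 (h.comp (LinearMap.baseChange A p))
    refine ⟨LinearMap.lTensor A (LinearMap.lcomp R₁ N i) t'', ?_⟩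
    rw [aux_nat, ht, LinearMap.comp_assoc, ← LinearMap.baseChange_comp, hi,
      LinearMap.baseChange_id, LinearMap.comp_id]

lemma aux_homFinite [Module.Finite R₁ M] [Module.Projective R₁ M] [Module.Finite R₁ N] :
    Module.Finite R₁ (M →ₗ[R₁] N) := by
  obtain ⟨n, p, hp⟩ := Module.Finite.exists_fin' R₁ M
  obtain ⟨i, hi⟩ := Module.projective_lifting_property p LinearMap.id hp
  haveI : Module.Finite R₁ ((Fin n → R₁) →ₗ[R₁] N) :=
    Module.Finite.equiv (LinearEquiv.piRing R₁ N (Fin n) R₁).symm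
  exact Module.Finite.of_surjective (LinearMap.lcomp R₁ N i)
    (fun g => ⟨g.comp p, by
      rw [LinearMap.lcomp_apply', LinearMap.comp_assoc, hi, LinearMap.comp_id]⟩)

lemma aux_homProjective [Module.Finite R₁ M] [Module.Projective R₁ M]
    [Module.Projective R₁ N] : Module.Projective R₁ (M →ₗ[R₁] N) := by
  obtain ⟨n, p, hp⟩ := Module.Finite.exists_fin' R₁ M
  obtain ⟨i, hi⟩ := Module.projective_lifting_property p LinearMap.id hp
  haveI h1 : Module.Projective R₁ (Fin n → N) := by
    haveI : Module.Projective R₁ (DirectSum (Fin n) (fun _ => N)) :=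
      inferInstanceAs (Module.Projective R₁ (Π₀ _ : Fin n, N))
    exact Module.Projective.of_equiv
      (DirectSum.linearEquivFunOnFintype R₁ (Fin n) (fun _ => N))
  haveI h2 : Module.Projective R₁ ((Fin n → R₁) →ₗ[R₁] N) :=
    Module.Projective.of_equiv (LinearEquiv.piRing R₁ N (Fin n) R₁).symm
  exact Module.Projective.of_split (LinearMap.lcomp R₁ N p) (LinearMap.lcomp R₁ N i)
    (by
      apply LinearMap.ext; intro g
      simp only [LinearMap.comp_apply, LinearMap.lcomp_apply', LinearMap.id_apply]
      rw [LinearMap.comp_assoc, hi, LinearMap.comp_id])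

end Aux


/-- A clean type synonym for `R` viewed as an `R`-algebra via `φ`. -/
def TwA (_φ : R →+* R) : Type _ := R

def TwA.val {φ : R →+* R} (s : TwA φ) : R := s

def TwA.of (φ : R →+* R) (r : R) : TwA φ := r

def Tw.of (φ : R →+* R) (r : R) : Tw φ := r

instance (φ : R →+* R) : CommRing (TwA φ) := inferInstanceAs (CommRing R)
instance (φ : R →+* R) : Algebra R (TwA φ) := RingHom.toAlgebra φ

section Phi
variable (φ : R →+* R)
variable {M N : Type*} [AddCommGroup M] [Module R M] [AddCommGroup N] [Module R N]

lemma TwA.smul_def' (r : R) (s : TwA φ) : r • s = TwA.of φ (φ r * s.val) := by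
  rw [Algebra.smul_def]
  rfl

lemma Tw.smul_of (r : R) (x : R) : r • Tw.of φ x = Tw.of φ (φ r * x) := rfl

/-- the identity, as a linear equivalence `TwA φ ≃ Tw φ`. -/
def twEq : TwA φ ≃ₗ[R] Tw φ where
  toFun s := Tw.of φ s.val
  invFun s := TwA.of φ s.val
  left_inv s := rfl
  right_inv s := rfl
  map_add' a b := rfl
  map_smul' r s := by
    show Tw.of φ (r • s : TwA φ).val = r • Tw.of φ s.val
    rw [TwA.smul_def', Tw.smul_of]
    rfl

lemma phiLin_tmul (F : M →ₛₗ[φ] M) (s : Tw φ) (m : M) :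
    phiLin φ F (s ⊗ₜ[R] m) = s.val • F m := rfl

/-- transport of the twisted tensor product along `twEq`. -/
noncomputable def jT : TwA φ ⊗[R] M ≃ₗ[R] Tw φ ⊗[R] M :=
  TensorProduct.congr (twEq φ) (LinearEquiv.refl R M)

/-- the linearization, with the clean twisted algebra as source. -/
noncomputable def LA (F : M →ₛₗ[φ] M) : TwA φ ⊗[R] M →+ M :=
  (phiLin φ F).comp (jT φ).toLinearMap.toAddMonoidHom

lemma LA_tmul (F : M →ₛₗ[φ] M) (s : TwA φ) (m : M) :
    LA φ F (s ⊗ₜ[R] m) = s.val • F m := by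
  show phiLin φ F ((jT φ) (s ⊗ₜ[R] m)) = s.val • F m
  rw [jT, TensorProduct.congr_tmul]
  exact phiLin_tmul φ F _ m

lemma LA_one_tmul (F : M →ₛₗ[φ] M) (m : M) : LA φ F ((1 : TwA φ) ⊗ₜ[R] m) = F m := by
  rw [LA_tmul]
  exact one_smul R (F m)

lemma LA_bij (F : M →ₛₗ[φ] M) (hF : Function.Bijective (phiLin φ F)) :
    Function.Bijective (LA φ F) :=
  hF.comp (jT φ (M := M)).bijective

lemma LA_twsmul (F : M →ₛₗ[φ] M) (a : TwA φ) (t : TwA φ ⊗[R] M) :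
    LA φ F (a • t) = a.val • LA φ F t := by
  induction t using TensorProduct.induction_on with
  | zero => simp
  | tmul s m =>
      rw [TensorProduct.smul_tmul', LA_tmul, LA_tmul]
      rw [show (a • s).val = a.val * s.val from rfl, mul_smul]
  | add x y hx hy => rw [smul_add, map_add, hx, hy, map_add, smul_add]

lemma LA_rsmul (F : M →ₛₗ[φ] M) (r : R) (t : TwA φ ⊗[R] M) :
    LA φ F (r • t) = φ r • LA φ F t := by
  induction t using TensorProduct.induction_on with
  | zero => simp
  | tmul s m =>
      rw [TensorProduct.smul_tmul', LA_tmul, LA_tmul]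
      rw [show (r • s : TwA φ).val = φ r * s.val from
        congrArg TwA.val (TwA.smul_def' φ r s), mul_smul]
  | add x y hx hy => rw [smul_add, map_add, hx, hy, map_add, smul_add]

variable (FM : M →ₛₗ[φ] M) (FN : N →ₛₗ[φ] N)

/-- the additive equivalence given by an étale linearization. -/
noncomputable def eqLA (hFM : Function.Bijective (phiLin φ FM)) : TwA φ ⊗[R] M ≃+ M :=
  AddEquiv.ofBijective (LA φ FM) (LA_bij φ FM hFM)

lemma eqLA_apply (hFM : Function.Bijective (phiLin φ FM)) (t : TwA φ ⊗[R] M) :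
    eqLA φ FM hFM t = LA φ FM t := rfl

/-- conjugation of a twisted-linear map by the linearizations. -/
noncomputable def conj (hFM : Function.Bijective (phiLin φ FM))
    (h : TwA φ ⊗[R] M →ₗ[TwA φ] TwA φ ⊗[R] N) : M →ₗ[R] N where
  toFun m := LA φ FN (h ((eqLA φ FM hFM).symm m))
  map_add' m m' := by simp [map_add]
  map_smul' r m := by
    have h1 : (eqLA φ FM hFM).symm (r • m) = TwA.of φ r • (eqLA φ FM hFM).symm m := by
      apply (eqLA φ FM hFM).injective
      rw [AddEquiv.apply_symm_apply]
      have h3 : eqLA φ FM hFM (TwA.of φ r • (eqLA φ FM hFM).symm m)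
          = (TwA.of φ r).val • eqLA φ FM hFM ((eqLA φ FM hFM).symm m) :=
        LA_twsmul φ FM (TwA.of φ r) _
      rw [h3, AddEquiv.apply_symm_apply]
      rfl
    show LA φ FN (h ((eqLA φ FM hFM).symm (r • m)))
      = (RingHom.id R) r • LA φ FN (h ((eqLA φ FM hFM).symm m))
    rw [h1, map_smul, LA_twsmul]
    rfl

lemma conj_apply (hFM : Function.Bijective (phiLin φ FM))
    (h : TwA φ ⊗[R] M →ₗ[TwA φ] TwA φ ⊗[R] N) (m : M) :
    conj φ FM FN hFM h m = LA φ FN (h ((eqLA φ FM hFM).symm m)) := rfl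

lemma conj_smul (hFM : Function.Bijective (phiLin φ FM)) (a : TwA φ)
    (h : TwA φ ⊗[R] M →ₗ[TwA φ] TwA φ ⊗[R] N) :
    conj φ FM FN hFM (a • h) = a.val • conj φ FM FN hFM h := by
  apply LinearMap.ext; intro m
  rw [LinearMap.smul_apply]
  show LA φ FN ((a • h) ((eqLA φ FM hFM).symm m))
    = a.val • LA φ FN (h ((eqLA φ FM hFM).symm m))
  rw [LinearMap.smul_apply, LA_twsmul]

lemma conj_add (hFM : Function.Bijective (phiLin φ FM))
    (h h' : TwA φ ⊗[R] M →ₗ[TwA φ] TwA φ ⊗[R] N) :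
    conj φ FM FN hFM (h + h') = conj φ FM FN hFM h + conj φ FM FN hFM h' := by
  apply LinearMap.ext; intro m
  rw [LinearMap.add_apply]
  show LA φ FN ((h + h') ((eqLA φ FM hFM).symm m))
    = LA φ FN (h ((eqLA φ FM hFM).symm m)) + LA φ FN (h' ((eqLA φ FM hFM).symm m))
  rw [LinearMap.add_apply, map_add]

lemma conj_inj (hFM : Function.Bijective (phiLin φ FM))
    (hFN : Function.Bijective (phiLin φ FN)) :
    Function.Injective (conj φ FM FN hFM) := by
  intro h h' hhh
  apply LinearMap.ext; intro t
  apply (LA_bij φ FN hFN).1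
  have := congrArg (fun u => u (LA φ FM t)) hhh
  simp only [conj_apply] at this
  rwa [show (eqLA φ FM hFM).symm (LA φ FM t) = t from (eqLA φ FM hFM).symm_apply_apply t]
    at this

/-- the inverse of conjugation. -/
noncomputable def conjInv (hFM : Function.Bijective (phiLin φ FM))
    (hFN : Function.Bijective (phiLin φ FN)) (u : M →ₗ[R] N) :
    TwA φ ⊗[R] M →ₗ[TwA φ] TwA φ ⊗[R] N where
  toFun t := (eqLA φ FN hFN).symm (u (LA φ FM t))
  map_add' t t' := by simp [map_add]
  map_smul' a t := by
    have h2 : u (LA φ FM (a • t)) = a.val • u (LA φ FM t) := by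
      rw [LA_twsmul, map_smul]
    show (eqLA φ FN hFN).symm (u (LA φ FM (a • t)))
      = (RingHom.id (TwA φ)) a • (eqLA φ FN hFN).symm (u (LA φ FM t))
    rw [RingHom.id_apply, h2]
    apply (eqLA φ FN hFN).injective
    rw [AddEquiv.apply_symm_apply]
    have h3 : eqLA φ FN hFN (a • (eqLA φ FN hFN).symm (u (LA φ FM t)))
        = a.val • eqLA φ FN hFN ((eqLA φ FN hFN).symm (u (LA φ FM t))) :=
      LA_twsmul φ FN a _
    rw [h3, AddEquiv.apply_symm_apply]

lemma conj_conjInv (hFM : Function.Bijective (phiLin φ FM))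
    (hFN : Function.Bijective (phiLin φ FN)) (u : M →ₗ[R] N) :
    conj φ FM FN hFM (conjInv φ FM FN hFM hFN u) = u := by
  apply LinearMap.ext; intro m
  rw [conj_apply]
  show (eqLA φ FN hFN) ((eqLA φ FN hFN).symm
    (u (LA φ FM ((eqLA φ FM hFM).symm m)))) = u m
  rw [AddEquiv.apply_symm_apply]
  rw [show LA φ FM ((eqLA φ FM hFM).symm m) = (eqLA φ FM hFM) ((eqLA φ FM hFM).symm m) from rfl,
    AddEquiv.apply_symm_apply]

lemma conj_bij (hFM : Function.Bijective (phiLin φ FM))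
    (hFN : Function.Bijective (phiLin φ FN)) :
    Function.Bijective (conj φ FM FN hFM) :=
  ⟨conj_inj φ FM FN hFM hFN, fun u => ⟨conjInv φ FM FN hFM hFN u, conj_conjInv φ FM FN hFM hFN u⟩⟩

/-- the induced semilinear operator on `Hom(M, N)`. -/
noncomputable def FHsl (hFM : Function.Bijective (phiLin φ FM)) :
    (M →ₗ[R] N) →ₛₗ[φ] (M →ₗ[R] N) where
  toFun g := conj φ FM FN hFM (LinearMap.baseChange (TwA φ) g)
  map_add' g g' := by
    show conj φ FM FN hFM (LinearMap.baseChange (TwA φ) (g + g'))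
      = conj φ FM FN hFM (LinearMap.baseChange (TwA φ) g)
        + conj φ FM FN hFM (LinearMap.baseChange (TwA φ) g')
    rw [LinearMap.baseChange_add, conj_add]
  map_smul' r g := by
    apply LinearMap.ext; intro m
    show LA φ FN ((LinearMap.baseChange (TwA φ) (r • g)) ((eqLA φ FM hFM).symm m))
      = (φ r • conj φ FM FN hFM (LinearMap.baseChange (TwA φ) g)) m
    rw [LinearMap.baseChange_smul, LinearMap.smul_apply, LA_rsmul, LinearMap.smul_apply]
    rfl

lemma FHsl_apply (hFM : Function.Bijective (phiLin φ FM)) (g : M →ₗ[R] N) :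
    FHsl φ FM FN hFM g = conj φ FM FN hFM (LinearMap.baseChange (TwA φ) g) := rfl

lemma FHsl_FM (hFM : Function.Bijective (phiLin φ FM)) (g : M →ₗ[R] N) (m : M) :
    FHsl φ FM FN hFM g (FM m) = FN (g m) := by
  rw [FHsl_apply, conj_apply]
  have h1 : (eqLA φ FM hFM).symm (FM m) = (1 : TwA φ) ⊗ₜ[R] m := by
    apply (eqLA φ FM hFM).injective
    rw [AddEquiv.apply_symm_apply]
    exact (LA_one_tmul φ FM m).symm
  rw [h1, LinearMap.baseChange_tmul, LA_one_tmul]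

lemma conj_zero (hFM : Function.Bijective (phiLin φ FM)) :
    conj φ FM FN hFM 0 = 0 := by
  apply LinearMap.ext; intro m
  rw [conj_apply, LinearMap.zero_apply, map_zero, LinearMap.zero_apply]

lemma FHsl_of_comm (hFM : Function.Bijective (phiLin φ FM)) (g : M →ₗ[R] N)
    (hc : ∀ m, g (FM m) = FN (g m)) : FHsl φ FM FN hFM g = g := by
  have key : ∀ t : TwA φ ⊗[R] M,
      LA φ FN (LinearMap.baseChange (TwA φ) g t) = g (LA φ FM t) := by
    intro t
    induction t using TensorProduct.induction_on with
    | zero => simp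
    | tmul s m =>
        rw [LinearMap.baseChange_tmul, LA_tmul, LA_tmul, map_smul, hc]
    | add x y hx hy => rw [map_add, map_add, map_add, map_add, hx, hy]
  apply LinearMap.ext; intro m
  rw [FHsl_apply, conj_apply, key]
  rw [show LA φ FM ((eqLA φ FM hFM).symm m) = (eqLA φ FM hFM) ((eqLA φ FM hFM).symm m) from rfl,
    AddEquiv.apply_symm_apply]

lemma FHsl_philin_bij [Module.Finite R M] [Module.Projective R M]
    (hFM : Function.Bijective (phiLin φ FM)) (hFN : Function.Bijective (phiLin φ FN)) :
    Function.Bijective (phiLin φ (FHsl φ FM FN hFM)) := by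
  set jH : TwA φ ⊗[R] (M →ₗ[R] N) ≃ₗ[R] Tw φ ⊗[R] (M →ₗ[R] N) :=
    TensorProduct.congr (twEq φ) (LinearEquiv.refl R (M →ₗ[R] N)) with hjH
  have heq : ∀ t : Tw φ ⊗[R] (M →ₗ[R] N),
      phiLin φ (FHsl φ FM FN hFM) t
        = conj φ FM FN hFM (LinearMap.tensorProduct R (TwA φ) M N (jH.symm t)) := by
    intro t
    induction t using TensorProduct.induction_on with
    | zero => rw [map_zero, map_zero, map_zero, conj_zero]
    | tmul s g =>
        rw [phiLin_tmul]
        have h1 : jH.symm (s ⊗ₜ[R] g) = (twEq φ).symm s ⊗ₜ[R] g := by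
          rw [hjH, TensorProduct.congr_symm_tmul]
          rfl
        rw [h1, aux_e_tmul', conj_smul]
        rfl
    | add x y hx hy => rw [map_add, map_add, map_add, conj_add, hx, hy]
  have : ⇑(phiLin φ (FHsl φ FM FN hFM))
      = (conj φ FM FN hFM) ∘ (⇑(LinearMap.tensorProduct R (TwA φ) M N) ∘ ⇑(jH.symm)) :=
    funext heq
  rw [this]
  exact (conj_bij φ FM FN hFM hFN).comp ((aux_key (TwA φ) M N).comp jH.symm.bijective)

end Phi



section BCSL
variable {R₃ S₃ : Type*} [CommRing R₃] [CommRing S₃] [Algebra R₃ S₃]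
variable (φR : R₃ →+* R₃) (φS : S₃ →+* S₃)
variable {P : Type*} [AddCommGroup P] [Module R₃ P]

noncomputable def bcsl0 (hc : ∀ r, φS (algebraMap R₃ S₃ r) = algebraMap R₃ S₃ (φR r))
    (FP : P →ₛₗ[φR] P) : S₃ ⊗[R₃] P →+ S₃ ⊗[R₃] P :=
  TensorProduct.liftAddHom
    { toFun := fun s => AddMonoidHom.mk' (fun p => φS s ⊗ₜ[R₃] FP p)
        (fun a b => by
          show φS s ⊗ₜ[R₃] FP (a + b) = φS s ⊗ₜ[R₃] FP a + φS s ⊗ₜ[R₃] FP b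
          rw [map_add, TensorProduct.tmul_add])
      map_zero' := by ext p; simp
      map_add' := fun a b => by ext p; simp [TensorProduct.add_tmul] }
    (fun r s p => by
      show φS (r • s) ⊗ₜ[R₃] FP p = φS s ⊗ₜ[R₃] FP (r • p)
      rw [Algebra.smul_def, map_mul, hc, FP.map_smulₛₗ, TensorProduct.tmul_smul,
        TensorProduct.smul_tmul', Algebra.smul_def])

lemma bcsl0_tmul (hc : ∀ r, φS (algebraMap R₃ S₃ r) = algebraMap R₃ S₃ (φR r))
    (FP : P →ₛₗ[φR] P) (s : S₃) (p : P) :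
    bcsl0 φR φS hc FP (s ⊗ₜ[R₃] p) = φS s ⊗ₜ[R₃] FP p := rfl

noncomputable def bcsl (hc : ∀ r, φS (algebraMap R₃ S₃ r) = algebraMap R₃ S₃ (φR r))
    (FP : P →ₛₗ[φR] P) : (S₃ ⊗[R₃] P) →ₛₗ[φS] (S₃ ⊗[R₃] P) where
  toFun := bcsl0 φR φS hc FP
  map_add' := (bcsl0 φR φS hc FP).map_add
  map_smul' s' t := by
    show bcsl0 φR φS hc FP (s' • t) = φS s' • bcsl0 φR φS hc FP t
    induction t using TensorProduct.induction_on with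
    | zero => simp
    | tmul s p =>
        rw [TensorProduct.smul_tmul', smul_eq_mul, bcsl0_tmul, bcsl0_tmul, map_mul,
          TensorProduct.smul_tmul', smul_eq_mul]
    | add x y hx hy =>
        rw [smul_add, map_add, hx, hy, map_add, smul_add]
  
end BCSL

universe u

/-- Let `R → S` be an injective flat map of rings with commuting continuous actions of
`φ` and a group `Γ`, compatible with all structures.  If for every projective étale
`φ`-module `P` over `R` the natural map `P^{φ=1} → (S ⊗_R P)^{φ=1}` is an
isomorphism, then the base-change functor `M ↦ S ⊗_R M` from projective étale
`(φ,Γ)`-modules over `R` to those over `S` is fully faithful: every morphism of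
base-changed `(φ,Γ)`-modules descends uniquely. -/
theorem stmt_16 {R S : Type u} [CommRing R] [CommRing S] [Algebra R S]
    [Module.Flat R S] (hinj : Function.Injective (algebraMap R S))
    (φR : R →+* R) (φS : S →+* S)
    (hφcompat : ∀ r : R, φS (algebraMap R S r) = algebraMap R S (φR r))
    {Γ : Type*} [Group Γ]
    (ρR : Γ →* RingAut R) (ρS : Γ →* RingAut S)
    (hρ : ∀ γ r, ρS γ (algebraMap R S r) = algebraMap R S (ρR γ r))
    (hφΓR : ∀ γ r, φR (ρR γ r) = ρR γ (φR r))
    (hφΓS : ∀ γ s, φS (ρS γ s) = ρS γ (φS s))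
    -- hypothesis: for every projective étale φ-module P over R, the natural map
    -- P^{φ=1} → (S ⊗_R P)^{φ=1} is bijective
    (hfix : ∀ (P : Type u) [AddCommGroup P] [Module R P],
      Module.Finite R P → Module.Projective R P →
      ∀ (FP : P →ₛₗ[φR] P), Function.Bijective (phiLin φR FP) →
      ∀ (FPS : (S ⊗[R] P) →ₛₗ[φS] (S ⊗[R] P)),
        (∀ (s : S) (q : P), FPS (s ⊗ₜ[R] q) = φS s ⊗ₜ[R] FP q) →
        (∀ q q' : P, FP q = q → FP q' = q' →
          (1 : S) ⊗ₜ[R] q = (1 : S) ⊗ₜ[R] q' → q = q') ∧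
        (∀ t : S ⊗[R] P, FPS t = t → ∃ q : P, FP q = q ∧ (1 : S) ⊗ₜ[R] q = t))
    {M N : Type u} [AddCommGroup M] [Module R M] [Module.Finite R M]
    [Module.Projective R M]
    [AddCommGroup N] [Module R N] [Module.Finite R N] [Module.Projective R N]
    (FM : M →ₛₗ[φR] M) (hFM : Function.Bijective (phiLin φR FM))
    (FN : N →ₛₗ[φR] N) (hFN : Function.Bijective (phiLin φR FN))
    -- semilinear Γ-actions on M and N, commuting with φ
    (σM : Γ → M → M) (σN : Γ → N → N)
    (hσM1 : ∀ m, σM 1 m = m) (hσMmul : ∀ γ δ m, σM (γ * δ) m = σM γ (σM δ m))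
    (hσMadd : ∀ γ m m', σM γ (m + m') = σM γ m + σM γ m')
    (hσMsmul : ∀ γ (r : R) m, σM γ (r • m) = ρR γ r • σM γ m)
    (hσMF : ∀ γ m, σM γ (FM m) = FM (σM γ m))
    (hσN1 : ∀ n, σN 1 n = n) (hσNmul : ∀ γ δ n, σN (γ * δ) n = σN γ (σN δ n))
    (hσNadd : ∀ γ n n', σN γ (n + n') = σN γ n + σN γ n')
    (hσNsmul : ∀ γ (r : R) n, σN γ (r • n) = ρR γ r • σN γ n)
    (hσNF : ∀ γ n, σN γ (FN n) = FN (σN γ n))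
    -- the base-changed étale (φ,Γ)-structures on S ⊗ M and S ⊗ N
    (FMS : (S ⊗[R] M) →ₛₗ[φS] (S ⊗[R] M))
    (hFMS : ∀ (s : S) (m : M), FMS (s ⊗ₜ[R] m) = φS s ⊗ₜ[R] FM m)
    (FNS : (S ⊗[R] N) →ₛₗ[φS] (S ⊗[R] N))
    (hFNS : ∀ (s : S) (n : N), FNS (s ⊗ₜ[R] n) = φS s ⊗ₜ[R] FN n)
    (σMS : Γ → S ⊗[R] M → S ⊗[R] M) (σNS : Γ → S ⊗[R] N → S ⊗[R] N)
    (hσMS : ∀ γ (s : S) (m : M), σMS γ (s ⊗ₜ[R] m) = ρS γ s ⊗ₜ[R] σM γ m)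
    (hσNS : ∀ γ (s : S) (n : N), σNS γ (s ⊗ₜ[R] n) = ρS γ s ⊗ₜ[R] σN γ n)
    (hσMSadd : ∀ γ t t', σMS γ (t + t') = σMS γ t + σMS γ t')
    (hσNSadd : ∀ γ t t', σNS γ (t + t') = σNS γ t + σNS γ t') :
    ∀ G : (S ⊗[R] M) →ₗ[S] (S ⊗[R] N),
      (∀ t, G (FMS t) = FNS (G t)) → (∀ γ t, G (σMS γ t) = σNS γ (G t)) →
      ∃! g : M →ₗ[R] N,
        ((∀ m, g (FM m) = FN (g m)) ∧ (∀ γ m, g (σM γ m) = σN γ (g m))) ∧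
        LinearMap.baseChange S g = G := by
  intro G hGF hGΓ
  classical
  haveI hHfin : Module.Finite R (M →ₗ[R] N) := aux_homFinite (R₁ := R) M N
  haveI hHproj : Module.Projective R (M →ₗ[R] N) := aux_homProjective (R₁ := R) M N
  have heSbij := aux_key (R₁ := R) S M N
  set eS := LinearMap.tensorProduct R S M N with heS
  set FH := FHsl φR FM FN hFM with hFHdef
  set FHS := bcsl φR φS hφcompat FH with hFHSdef
  have hFHbij : Function.Bijective (phiLin φR FH) := FHsl_philin_bij φR FM FN hFM hFN
  have hFHStmul : ∀ (s : S) (q : M →ₗ[R] N), FHS (s ⊗ₜ[R] q) = φS s ⊗ₜ[R] FH q :=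
    fun s q => bcsl0_tmul φR φS hφcompat FH s q
  -- compatibility of base change with the hom-operator
  have bc_comm : ∀ (g : M →ₗ[R] N) (x : S ⊗[R] M),
      LinearMap.baseChange S (FH g) (FMS x) = FNS (LinearMap.baseChange S g x) := by
    intro g x
    induction x using TensorProduct.induction_on with
    | zero => rw [map_zero, map_zero, map_zero, map_zero]
    | tmul s m =>
        rw [hFMS, LinearMap.baseChange_tmul, LinearMap.baseChange_tmul, hFNS, hFHdef,
          FHsl_FM]
    | add x y hx hy => rw [map_add, map_add, map_add, map_add, hx, hy]
  have star : ∀ (t : S ⊗[R] (M →ₗ[R] N)) (x : S ⊗[R] M),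
      eS (FHS t) (FMS x) = FNS (eS t x) := by
    intro t x
    induction t using TensorProduct.induction_on with
    | zero => simp
    | tmul s g =>
        rw [hFHStmul, heS, aux_e_tmul', aux_e_tmul', LinearMap.smul_apply,
          LinearMap.smul_apply, bc_comm, FNS.map_smulₛₗ]
    | add x' y hx hy =>
        rw [map_add (f := FHS), map_add, LinearMap.add_apply, map_add,
          LinearMap.add_apply, map_add, hx, hy]
  -- the range of FMS spans everything
  have hsp : ∀ x : S ⊗[R] M, x ∈ Submodule.span S (Set.range ⇑FMS) := by
    intro x
    induction x using TensorProduct.induction_on with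
    | zero => exact Submodule.zero_mem _
    | tmul s m =>
        obtain ⟨t, ht⟩ := hFM.2 m
        rw [← ht]
        clear ht
        induction t using TensorProduct.induction_on with
        | zero => rw [map_zero, TensorProduct.tmul_zero]; exact Submodule.zero_mem _
        | tmul s' m' =>
            rw [phiLin_tmul, TensorProduct.tmul_smul]
            refine Submodule.smul_of_tower_mem _ _ ?_
            have h1 : s ⊗ₜ[R] FM m' = s • ((1:S) ⊗ₜ[R] FM m') := by
              rw [TensorProduct.smul_tmul', smul_eq_mul, mul_one]
            rw [h1]
            refine Submodule.smul_mem _ _ ?_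
            have h2 : (1:S) ⊗ₜ[R] FM m' = FMS ((1:S) ⊗ₜ[R] m') := by
              rw [hFMS, map_one]
            rw [h2]
            exact Submodule.subset_span ⟨_, rfl⟩
        | add u v hu hv =>
            rw [map_add, TensorProduct.tmul_add]
            exact Submodule.add_mem _ hu hv
    | add x y hx hy => exact Submodule.add_mem _ hx hy
  obtain ⟨t₀, ht₀⟩ := heSbij.2 G
  have hfixt : FHS t₀ = t₀ := by
    apply heSbij.1
    rw [ht₀]
    apply LinearMap.ext; intro x
    refine Submodule.span_induction ?_ ?_ ?_ ?_ (hsp x)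
    · rintro _ ⟨y, rfl⟩
      rw [star, ht₀, ← hGF y]
    · rw [map_zero, map_zero]
    · intro a b _ _ ha hb
      rw [map_add, map_add, ha, hb]
    · intro a x' _ hx'
      rw [map_smul, map_smul, hx']
  obtain ⟨g, hgfix, hg1⟩ :=
    (hfix (M →ₗ[R] N) hHfin hHproj FH hFHbij FHS hFHStmul).2 t₀ hfixt
  have hbcg : LinearMap.baseChange S g = G := by
    have e2 := aux_e_tmul' (R₁ := R) S M N (1:S) g
    rw [one_smul] at e2
    rw [← e2, hg1, ht₀]
  have hgF : ∀ m, g (FM m) = FN (g m) := by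
    intro m
    conv_lhs => rw [← hgfix]
    exact FHsl_FM φR FM FN hFM g m
  have injN : ∀ n n' : N, (1:S) ⊗ₜ[R] n = (1:S) ⊗ₜ[R] n' → n = n' := by
    intro n n' h
    have hLinj : Function.Injective ⇑(Algebra.linearMap R S) := by
      intro a b hab
      apply hinj
      rwa [Algebra.linearMap_apply, Algebra.linearMap_apply] at hab
    have hmap : Function.Injective ⇑((Algebra.linearMap R S).rTensor N) :=
      Module.Flat.rTensor_preserves_injective_linearMap _ hLinj
    have h2 : ∀ n'' : N, (Algebra.linearMap R S).rTensor N ((1:R) ⊗ₜ[R] n'') = (1:S) ⊗ₜ[R] n'' := by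
      intro n''
      rw [LinearMap.rTensor_tmul, Algebra.linearMap_apply, map_one]
    have h3 : (1:R) ⊗ₜ[R] n = (1:R) ⊗ₜ[R] n' := hmap (by rw [h2, h2, h])
    have h4 := congrArg (TensorProduct.lid R N) h3
    rwa [TensorProduct.lid_tmul, TensorProduct.lid_tmul, one_smul, one_smul] at h4
  have hgΓ : ∀ γ m, g (σM γ m) = σN γ (g m) := by
    intro γ m
    apply injN
    have c1 : (1:S) ⊗ₜ[R] σM γ m = σMS γ ((1:S) ⊗ₜ[R] m) := by
      rw [hσMS, map_one]
    have c2 : (1:S) ⊗ₜ[R] g (σM γ m)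
        = LinearMap.baseChange S g ((1:S) ⊗ₜ[R] σM γ m) := by
      rw [LinearMap.baseChange_tmul]
    rw [c2, c1, hbcg, hGΓ, ← hbcg, LinearMap.baseChange_tmul, hσNS, map_one]
  refine ⟨g, ⟨⟨hgF, hgΓ⟩, hbcg⟩, ?_⟩
  rintro g' ⟨⟨hg'F, _⟩, hg'bc⟩
  have h1' : FH g' = g' := FHsl_of_comm φR FM FN hFM g' hg'F
  have h2 : (1:S) ⊗ₜ[R] g' = (1:S) ⊗ₜ[R] g := by
    apply heSbij.1
    have e1 := aux_e_tmul' (R₁ := R) S M N (1:S) g'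
    have e2 := aux_e_tmul' (R₁ := R) S M N (1:S) g
    rw [one_smul] at e1 e2
    rw [e1, e2, hg'bc, hbcg]
  exact (hfix (M →ₗ[R] N) hHfin hHproj FH hFHbij FHS hFHStmul).1 g' g h1' hgfix h2
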